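/- The hypertableau calculus T_{K_m(¬)}^{hyp}, obtained from T_{K_m(¬)}^{c} (T_{K_m(¬)} with the rule (∨⁺) replaced by the rules (split_k), k > 1: T(p₁∨…∨p_k,x) / T(p₁,x) | … | T(p_k,x)) by adding, for all m, n with m+n > 1, the hypertableau rules (hyp_{mn}): from T(¬p₁∨…∨¬p_m∨q₁∨…∨q_n, x) together with T(p₁,x), …, T(p_m,x) branch into T(q₁,x) | … | T(q_n,x) (a closure rule when n = 0), applicable only when p₁,…,p_m are propositional variables and none of q₁,…,q_n is a negated propositional variable (disjunction treated modulo associativity and commutativity), is sound and constructively complete for the logic K_m(¬). -/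

import Mathlib

set_option autoImplicit false

namespace KmNotTableau

/-- Relation terms of the logic `K_m(¬)`: `α ::= a_1 | … | a_m | ¬α`. -/
inductive RTerm (m : ℕ) : Type
  | atom : Fin m → RTerm m
  | neg : RTerm m → RTerm m

/-- Formulas of the logic `K_m(¬)`: `φ ::= p | ¬φ | φ∨φ | [α]φ`. -/
inductive Fm (m : ℕ) : Type
  | var : ℕ → Fm m
  | neg : Fm m → Fm m
  | or : Fm m → Fm m → Fm m
  | box : RTerm m → Fm m → Fm m

/-- A `K_m(¬)`-model `M = (W, (R_a)_a, V)` with `W` nonempty. -/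
structure KModel (m : ℕ) where
  W : Type
  ne : Nonempty W
  R : Fin m → W → W → Prop
  V : ℕ → W → Prop

/-- Interpretation of relation terms: `R_{¬α} = (W×W) ∖ R_α`. -/
def KModel.RT {m : ℕ} (M : KModel m) : RTerm m → M.W → M.W → Prop
  | .atom a => M.R a
  | .neg α => fun v w => ¬ M.RT α v w

/-- Satisfaction in a `K_m(¬)`-model. -/
def KModel.sat {m : ℕ} (M : KModel m) : M.W → Fm m → Prop
  | v, .var p => M.V p v
  | v, .neg φ => ¬ M.sat v φ
  | v, .or φ ψ => M.sat v φ ∨ M.sat v ψ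
  | v, .box α φ => ∀ w, M.RT α v w → M.sat w φ

/-- A set of formulas is satisfiable if some model and world satisfy all its members. -/
def Satisfiable {m : ℕ} (N : Set (Fm m)) : Prop :=
  ∃ (M : KModel m) (v : M.W), ∀ φ ∈ N, M.sat v φ

/-- Labels: terms generated from the initial constant `a₀` and Skolem terms `f(α,φ,t)`. -/
inductive Label (m : ℕ) : Type
  | a0 : Label m
  | sk : RTerm m → Fm m → Label m → Label m

/-- Tableau formulas: `T(φ,t)`, `F(φ,t)`, `T_R(α,t,t')`, `F_R(α,t,t')`. -/
inductive TabFm (m : ℕ) : Type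
  | T : Fm m → Label m → TabFm m
  | F : Fm m → Label m → TabFm m
  | TR : RTerm m → Label m → Label m → TabFm m
  | FR : RTerm m → Label m → Label m → TabFm m

/-- The labels occurring in a tableau formula. -/
def TabFm.labels {m : ℕ} : TabFm m → Set (Label m)
  | .T _ t => {t}
  | .F _ t => {t}
  | .TR _ t t' => {t, t'}
  | .FR _ t t' => {t, t'}

/-- The labels occurring in a set of tableau formulas (the initial label `a₀`,
introduced at the root, always counts as occurring). -/
def Lab {m : ℕ} (B : Set (TabFm m)) : Set (Label m) :=
  insert Label.a0 {t | ∃ f ∈ B, t ∈ f.labels}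

/-- A calculus: `C s ds` holds if, on a branch whose set of formulas is `s`, some rule
of the calculus is applicable with denominator instances `ds` (a closure rule
application has `ds = []`). -/
abbrev Calc (m : ℕ) := Set (TabFm m) → List (Set (TabFm m)) → Prop

/-- The root node `{T(φ,a₀) | φ ∈ N}` of a tableau for input `N`. -/
def initial {m : ℕ} (N : Set (Fm m)) : Set (TabFm m) :=
  {f | ∃ φ ∈ N, f = TabFm.T φ Label.a0}

/-- A tableau for input `N` in calculus `C`: a finitely branching tree of sets of tableau
formulas (nodes indexed by positions `List ℕ`, children of `p` being `p ++ [i]`), whose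
root is `{T(φ,a₀) | φ ∈ N}`, and such that the children of every node are obtained by
applying a rule of `C`: each child adds one denominator instance to the node's set. -/
structure Tableau (m : ℕ) (C : Calc m) (N : Set (Fm m)) where
  node : List ℕ → Option (Set (TabFm m))
  rootEq : node [] = some (initial N)
  tree : ∀ (p : List ℕ) (i : ℕ), node (p ++ [i]) ≠ none → node p ≠ none
  step : ∀ (p : List ℕ) (s : Set (TabFm m)), node p = some s →
    (∀ i : ℕ, node (p ++ [i]) = none) ∨
    (∃ ds, C s ds ∧ ∀ i : ℕ, node (p ++ [i]) = (ds[i]?).map (fun d => s ∪ d))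

/-- A branch of a tableau: a maximal path from the root (represented by its
set of positions, a maximal chain under the prefix order). -/
structure Branch {m : ℕ} {C : Calc m} {N : Set (Fm m)} (Tb : Tableau m C N) where
  pos : Set (List ℕ)
  inTree : ∀ p ∈ pos, Tb.node p ≠ none
  chain : ∀ p ∈ pos, ∀ q ∈ pos, p <+: q ∨ q <+: p
  downClosed : ∀ p ∈ pos, ∀ q : List ℕ, q <+: p → q ∈ pos
  maximal : ∀ q : List ℕ, Tb.node q ≠ none → (∀ p ∈ pos, p <+: q ∨ q <+: p) → q ∈ pos

/-- The set of tableau formulas occurring on a branch. -/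
def Branch.fmls {m : ℕ} {C : Calc m} {N : Set (Fm m)} {Tb : Tableau m C N}
    (Br : Branch Tb) : Set (TabFm m) :=
  {f | ∃ p ∈ Br.pos, ∃ s, Tb.node p = some s ∧ f ∈ s}

/-- A branch is open if no closure rule has been applied (is applicable) on it. -/
def Branch.IsOpen {m : ℕ} {C : Calc m} {N : Set (Fm m)} {Tb : Tableau m C N}
    (Br : Branch Tb) : Prop := ¬ C Br.fmls []

/-- A tableau is fully expanded if on every open branch every applicable rule has been
applied, i.e. some denominator instance of the rule is already contained in the branch. -/
def Tableau.Expanded {m : ℕ} {C : Calc m} {N : Set (Fm m)} (Tb : Tableau m C N) : Prop :=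
  ∀ Br : Branch Tb, Br.IsOpen → ∀ ds, C Br.fmls ds → ∃ d ∈ ds, d ⊆ Br.fmls

/-- A `K_m(¬)`-model whose domain is (a set of) labels: the model `I(B)` constructed
from a branch has domain the set of labels occurring in `B`. -/
structure LModel (m : ℕ) where
  R : Fin m → Label m → Label m → Prop
  V : ℕ → Label m → Prop

/-- Interpretation of relation terms in a label model: `R_{¬α}` is the complement. -/
def LModel.RT {m : ℕ} (M : LModel m) : RTerm m → Label m → Label m → Prop
  | .atom a => M.R a
  | .neg α => fun t t' => ¬ M.RT α t t'

/-- Satisfaction in a label model relativised to its domain `D`. -/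
def LModel.sat {m : ℕ} (M : LModel m) (D : Set (Label m)) : Label m → Fm m → Prop
  | t, .var p => M.V p t
  | t, .neg φ => ¬ M.sat D t φ
  | t, .or φ ψ => M.sat D t φ ∨ M.sat D t ψ
  | t, .box α φ => ∀ t' ∈ D, M.RT α t t' → M.sat D t' φ

/-- Every tableau formula of `B` is true in the model `M` with domain `Lab B`:
`T(φ,t) ∈ B` implies `φ` holds at `t`; `F(φ,t) ∈ B` implies `φ` fails at `t`;
`T_R(α,t,t') ∈ B` implies `(t,t') ∈ R_α`; `F_R(α,t,t') ∈ B` implies `(t,t') ∉ R_α`. -/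
def Reflects {m : ℕ} (M : LModel m) (B : Set (TabFm m)) : Prop :=
  (∀ φ t, TabFm.T φ t ∈ B → M.sat (Lab B) t φ) ∧
  (∀ φ t, TabFm.F φ t ∈ B → ¬ M.sat (Lab B) t φ) ∧
  (∀ α t t', TabFm.TR α t t' ∈ B → M.RT α t t') ∧
  (∀ α t t', TabFm.FR α t t' ∈ B → ¬ M.RT α t t')

/-- The calculus `T_{K_m(¬)}`. -/
def TKmNot (m : ℕ) : Calc m := fun s ds =>
  -- (¬⁺) T(¬p,x) / F(p,x)
  (∃ φ x, TabFm.T (.neg φ) x ∈ s ∧ ds = [{TabFm.F φ x}]) ∨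
  -- (¬⁻) F(¬p,x) / T(p,x)
  (∃ φ x, TabFm.F (.neg φ) x ∈ s ∧ ds = [{TabFm.T φ x}]) ∨
  -- (∨⁺) T(p∨q,x) / T(p,x) | T(q,x)
  (∃ φ ψ x, TabFm.T (.or φ ψ) x ∈ s ∧ ds = [{TabFm.T φ x}, {TabFm.T ψ x}]) ∨
  -- (∨⁻) F(p∨q,x) / F(p,x), F(q,x)
  (∃ φ ψ x, TabFm.F (.or φ ψ) x ∈ s ∧ ds = [{TabFm.F φ x, TabFm.F ψ x}]) ∨
  -- (box) T([r]p,x) / F_R(r,x,y) | T(p,y), for any label y occurring on the branch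
  (∃ α φ x y, TabFm.T (.box α φ) x ∈ s ∧ y ∈ Lab s ∧
    ds = [{TabFm.FR α x y}, {TabFm.T φ y}]) ∨
  -- (dia) F([r]p,x) / T_R(r,x,f(r,p,x)), F(p,f(r,p,x))
  (∃ α φ x, TabFm.F (.box α φ) x ∈ s ∧
    ds = [{TabFm.TR α x (Label.sk α φ x), TabFm.F φ (Label.sk α φ x)}]) ∨
  -- closure rules
  (∃ φ x, TabFm.T φ x ∈ s ∧ TabFm.F φ x ∈ s ∧ ds = []) ∨
  (∃ α x y, TabFm.TR α x y ∈ s ∧ TabFm.FR α x y ∈ s ∧ ds = []) ∨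
  -- (¬R⁺) T_R(¬r,x,y) / F_R(r,x,y)
  (∃ α x y, TabFm.TR (.neg α) x y ∈ s ∧ ds = [{TabFm.FR α x y}]) ∨
  -- (¬R⁻) F_R(¬r,x,y) / T_R(r,x,y)
  (∃ α x y, TabFm.FR (.neg α) x y ∈ s ∧ ds = [{TabFm.TR α x y}])

/-- The multiset of disjuncts of a formula (disjunction treated modulo associativity
and commutativity). -/
def disjuncts {m : ℕ} : Fm m → Multiset (Fm m)
  | .or φ ψ => disjuncts φ + disjuncts ψ
  | φ => {φ}

/-- The hypertableau calculus `T_{K_m(¬)}^{hyp}`: `T_{K_m(¬)}` with the rule (∨⁺)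
replaced by the rules (split_k), `k > 1`: `T(p₁∨…∨p_k,x) / T(p₁,x) | … | T(p_k,x)`,
and extended, for all `m, n` with `m + n > 1`, with the hypertableau rules (hyp_{mn}):
from `T(¬p₁∨…∨¬p_m∨q₁∨…∨q_n, x)` together with `T(p₁,x), …, T(p_m,x)` branch into
`T(q₁,x) | … | T(q_n,x)` (a closure rule when `n = 0`), applicable only when
`p₁,…,p_m` are propositional variables and none of `q₁,…,q_n` is a negated
propositional variable (disjunction treated modulo associativity and commutativity). -/
def TKmNotHyp (m : ℕ) : Calc m := fun s ds =>
  (∃ φ x, TabFm.T (.neg φ) x ∈ s ∧ ds = [{TabFm.F φ x}]) ∨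
  (∃ φ x, TabFm.F (.neg φ) x ∈ s ∧ ds = [{TabFm.T φ x}]) ∨
  -- (split_k), k > 1
  (∃ (φ : Fm m) (x : Label m) (qs : Multiset (Fm m)),
    TabFm.T φ x ∈ s ∧ disjuncts φ = qs ∧ 2 ≤ Multiset.card qs ∧
    ds = qs.toList.map (fun q => {TabFm.T q x})) ∨
  -- (hyp_{mn}), m + n > 1
  (∃ (φ : Fm m) (x : Label m) (ps : Multiset ℕ) (qs : Multiset (Fm m)),
    TabFm.T φ x ∈ s ∧
    disjuncts φ = ps.map (fun p => Fm.neg (Fm.var p)) + qs ∧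
    (∀ q ∈ qs, ∀ p : ℕ, q ≠ Fm.neg (Fm.var p)) ∧
    2 ≤ Multiset.card ps + Multiset.card qs ∧
    (∀ p ∈ ps, TabFm.T (Fm.var p) x ∈ s) ∧
    ds = qs.toList.map (fun q => {TabFm.T q x})) ∨
  (∃ φ ψ x, TabFm.F (.or φ ψ) x ∈ s ∧ ds = [{TabFm.F φ x, TabFm.F ψ x}]) ∨
  (∃ α φ x y, TabFm.T (.box α φ) x ∈ s ∧ y ∈ Lab s ∧
    ds = [{TabFm.FR α x y}, {TabFm.T φ y}]) ∨
  (∃ α φ x, TabFm.F (.box α φ) x ∈ s ∧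
    ds = [{TabFm.TR α x (Label.sk α φ x), TabFm.F φ (Label.sk α φ x)}]) ∨
  (∃ φ x, TabFm.T φ x ∈ s ∧ TabFm.F φ x ∈ s ∧ ds = []) ∨
  (∃ α x y, TabFm.TR α x y ∈ s ∧ TabFm.FR α x y ∈ s ∧ ds = []) ∨
  (∃ α x y, TabFm.TR (.neg α) x y ∈ s ∧ ds = [{TabFm.FR α x y}]) ∨
  (∃ α x y, TabFm.FR (.neg α) x y ∈ s ∧ ds = [{TabFm.TR α x y}])

/-!
Soundness: given a model of the input, read the label `a₀` as the satisfying world and each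
Skolem term `f(α,φ,x)` as an `α`-successor of (the reading of) `x` refuting `φ` whenever
there is one. Every rule then turns a set of true tableau formulas into one with a true
denominator instance — for (hyp_{mn}) because `T(pᵢ,x)` falsifies each `¬pᵢ`, so a true
disjunct is among the `qⱼ` — and following true children yields a branch on which no closure
rule applies.

Completeness: on an open, fully expanded branch `B` put `R_a = {(t,t') | T_R(a,t,t') ∈ B}`
and `V(p) = {t | T(p,t) ∈ B}`; induction on relation terms and formulas shows that every
formula of `B` is true. The hypertableau rules play no role here: the (split_k) rules alone
decompose positive disjunctions.
-/

section Disjuncts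

variable {m : ℕ}

theorem card_disjuncts_pos (φ : Fm m) : 0 < Multiset.card (disjuncts φ) := by
  induction φ with
  | or φ ψ ih₁ _ => simpa [disjuncts] using Or.inl ih₁
  | _ => simp [disjuncts]

theorem two_le_card_disjuncts_or (φ ψ : Fm m) : 2 ≤ Multiset.card (disjuncts (.or φ ψ)) := by
  have := card_disjuncts_pos φ
  have := card_disjuncts_pos ψ
  simp only [disjuncts, Multiset.card_add]
  omega

theorem KModel.exists_mem_disjuncts_sat {M : KModel m} {w : M.W} {φ : Fm m} (h : M.sat w φ) :
    ∃ q ∈ disjuncts φ, M.sat w q := by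
  induction φ with
  | or φ ψ ih₁ ih₂ =>
    rcases h with h | h
    · obtain ⟨q, hq, hw⟩ := ih₁ h
      exact ⟨q, Multiset.mem_add.2 (Or.inl hq), hw⟩
    · obtain ⟨q, hq, hw⟩ := ih₂ h
      exact ⟨q, Multiset.mem_add.2 (Or.inr hq), hw⟩
  | _ => exact ⟨_, Multiset.mem_singleton_self _, h⟩

end Disjuncts

section GreedyPath

variable (g : List ℕ → Prop)

open Classical in
noncomputable def extendGood (p : List ℕ) : List ℕ :=
  if h : ∃ i, g (p ++ [i]) then p ++ [h.choose] else p

noncomputable def greedyPath (n : ℕ) : List ℕ := (extendGood g)^[n] []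

theorem extendGood_cases (p : List ℕ) :
    (extendGood g p = p ∧ ∀ i, ¬ g (p ++ [i])) ∨ ∃ i, g (p ++ [i]) ∧ extendGood g p = p ++ [i] := by
  unfold extendGood
  split_ifs with h
  · exact Or.inr ⟨_, h.choose_spec, rfl⟩
  · exact Or.inl ⟨rfl, not_exists.1 h⟩

variable {g}

theorem greedyPath_succ (n : ℕ) : greedyPath g (n + 1) = extendGood g (greedyPath g n) :=
  Function.iterate_succ_apply' _ _ _

theorem good_greedyPath (h0 : g []) : ∀ n, g (greedyPath g n)
  | 0 => h0
  | n + 1 => by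
    rw [greedyPath_succ]
    rcases extendGood_cases g (greedyPath g n) with ⟨hstay, -⟩ | ⟨i, hi, hext⟩
    · rw [hstay]; exact good_greedyPath h0 n
    · rw [hext]; exact hi

theorem greedyPath_prefix_succ (n : ℕ) : greedyPath g n <+: greedyPath g (n + 1) := by
  rw [greedyPath_succ]
  rcases extendGood_cases g (greedyPath g n) with ⟨hstay, -⟩ | ⟨i, -, hext⟩
  · rw [hstay]
  · rw [hext]; exact List.prefix_append _ _

theorem greedyPath_prefix {a b : ℕ} (h : a ≤ b) : greedyPath g a <+: greedyPath g b := by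
  induction h with
  | refl => exact List.prefix_refl _
  | step _ ih => exact ih.trans (greedyPath_prefix_succ _)

theorem exists_greedyPath_eq_of_prefix {q : List ℕ} :
    ∀ {n}, q <+: greedyPath g n → ∃ k, greedyPath g k = q
  | 0, h => ⟨0, (List.prefix_nil.1 h).symm⟩
  | n + 1, h => by
    rcases extendGood_cases g (greedyPath g n) with ⟨hstay, -⟩ | ⟨i, -, hext⟩
    · rw [greedyPath_succ, hstay] at h
      exact exists_greedyPath_eq_of_prefix h
    · rw [greedyPath_succ, hext] at h
      rcases List.prefix_concat_iff.1 h with rfl | h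
      · exact ⟨n + 1, by rw [greedyPath_succ, hext]⟩
      · exact exists_greedyPath_eq_of_prefix h

theorem length_greedyPath_or_stuck :
    ∀ n, (greedyPath g n).length = n ∨ ∀ i, ¬ g (greedyPath g n ++ [i])
  | 0 => Or.inl rfl
  | n + 1 => by
    rw [greedyPath_succ]
    rcases extendGood_cases g (greedyPath g n) with ⟨hstay, hstuck⟩ | ⟨i, hi, hext⟩
    · rw [hstay]; exact Or.inr hstuck
    · rcases length_greedyPath_or_stuck n with hlen | hstuck
      · exact Or.inl (by simp [hext, hlen])
      · exact absurd hi (hstuck i)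

end GreedyPath

section Tableaux

variable {m : ℕ} {C : Calc m} {N : Set (Fm m)}

theorem Tableau.node_ne_none_of_prefix (Tb : Tableau m C N) {p q : List ℕ} (hpq : p <+: q)
    (hq : Tb.node q ≠ none) : Tb.node p ≠ none := by
  obtain ⟨r, rfl⟩ := hpq
  induction r using List.reverseRecOn with
  | nil => simpa using hq
  | append_singleton r c ih => exact ih (Tb.tree _ c (by simpa using hq))

theorem Tableau.exists_branch_forall_good (Tb : Tableau m C N) {g : List ℕ → Prop} (h0 : g [])
    (hnode : ∀ p, g p → Tb.node p ≠ none)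
    (hchild : ∀ p c, g p → Tb.node (p ++ [c]) ≠ none → ∃ i, g (p ++ [i])) :
    ∃ Br : Branch Tb, ∀ p ∈ Br.pos, g p := by
  refine ⟨⟨Set.range (greedyPath g), ?_, ?_, ?_, ?_⟩, ?_⟩
  · rintro _ ⟨n, rfl⟩
    exact hnode _ (good_greedyPath h0 n)
  · rintro _ ⟨a, rfl⟩ _ ⟨b, rfl⟩
    rcases le_total a b with h | h
    exacts [Or.inl (greedyPath_prefix h), Or.inr (greedyPath_prefix h)]
  · rintro _ ⟨n, rfl⟩ q hq
    exact exists_greedyPath_eq_of_prefix hq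
  · intro q hq hcomp
    rcases hcomp _ ⟨q.length, rfl⟩ with ⟨r, hr⟩ | hqp
    · rcases r with _ | ⟨c, r⟩
      · exact ⟨q.length, by simpa using hr⟩
      · have hlen : (greedyPath g q.length).length ≠ q.length := by
          have := congrArg List.length hr
          simp only [List.length_append, List.length_cons] at this
          omega
        have hc : Tb.node (greedyPath g q.length ++ [c]) ≠ none :=
          Tb.node_ne_none_of_prefix ⟨r, by simpa using hr⟩ hq
        obtain ⟨i, hi⟩ := hchild _ c (good_greedyPath h0 _) hc
        exact ((length_greedyPath_or_stuck q.length).resolve_left hlen i hi).elim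
    · exact exists_greedyPath_eq_of_prefix hqp
  · rintro _ ⟨n, rfl⟩
    exact good_greedyPath h0 n

theorem Tableau.exists_open_branch (Tb : Tableau m C N) (P : TabFm m → Prop)
    (hroot : ∀ f ∈ initial N, P f)
    (hrule : ∀ s ds, (∀ f ∈ s, P f) → C s ds → ∃ d ∈ ds, ∀ f ∈ d, P f) :
    ∃ Br : Branch Tb, Br.IsOpen := by
  obtain ⟨Br, hBr⟩ := Tb.exists_branch_forall_good
    (g := fun p => ∃ s, Tb.node p = some s ∧ ∀ f ∈ s, P f) ⟨_, Tb.rootEq, hroot⟩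
    (fun p ⟨s, hs, _⟩ => by simp [hs])
    (by
      rintro p c ⟨s, hs, hP⟩ hc
      rcases Tb.step p s hs with hleaf | ⟨ds, hC, hchildren⟩
      · exact absurd (hleaf c) hc
      obtain ⟨d, hd, hdP⟩ := hrule s ds hP hC
      obtain ⟨i, hi⟩ := List.mem_iff_getElem?.1 hd
      refine ⟨i, s ∪ d, by rw [hchildren i, hi]; rfl, ?_⟩
      rintro f (hf | hf)
      exacts [hP f hf, hdP f hf])
  have hfmls : ∀ f ∈ Br.fmls, P f := by
    rintro f ⟨p, hp, s, hs, hf⟩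
    obtain ⟨s', hs', hP⟩ := hBr p hp
    exact hP f (Option.some_injective _ (hs.symm.trans hs') ▸ hf)
  -- a closure rule has no denominator instance, so none of them can be true
  refine ⟨Br, fun hclosed => ?_⟩
  obtain ⟨d, hd, -⟩ := hrule _ _ hfmls hclosed
  exact List.not_mem_nil hd

end Tableaux

section Soundness

variable {m : ℕ}

open Classical in
noncomputable def interp (M : KModel m) (v : M.W) : Label m → M.W
  | .a0 => v
  | .sk α φ x =>
    if h : ∃ u, M.RT α (interp M v x) u ∧ ¬ M.sat u φ then h.choose
    else Classical.choice M.ne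

theorem interp_sk (M : KModel m) (v : M.W) {α : RTerm m} {φ : Fm m} {x : Label m}
    (h : ∃ u, M.RT α (interp M v x) u ∧ ¬ M.sat u φ) :
    M.RT α (interp M v x) (interp M v (.sk α φ x)) ∧ ¬ M.sat (interp M v (.sk α φ x)) φ := by
  rw [interp, dif_pos h]
  exact h.choose_spec

def holds (M : KModel m) (ι : Label m → M.W) : TabFm m → Prop
  | .T φ t => M.sat (ι t) φ
  | .F φ t => ¬ M.sat (ι t) φ
  | .TR α t t' => M.RT α (ι t) (ι t')
  | .FR α t t' => ¬ M.RT α (ι t) (ι t')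

theorem exists_holds_T_of_mem {M : KModel m} {ι : Label m → M.W} {x : Label m}
    {qs : Multiset (Fm m)} {q : Fm m} (hq : q ∈ qs) (hsat : M.sat (ι x) q) :
    ∃ d ∈ qs.toList.map (fun q => ({TabFm.T q x} : Set (TabFm m))), ∀ f ∈ d, holds M ι f :=
  ⟨_, List.mem_map.2 ⟨q, Multiset.mem_toList.2 hq, rfl⟩, by simpa [holds] using hsat⟩

theorem TKmNotHyp.exists_holds_denominator (M : KModel m) (v : M.W)
    {s : Set (TabFm m)} {ds : List (Set (TabFm m))}
    (hs : ∀ f ∈ s, holds M (interp M v) f) (hC : TKmNotHyp m s ds) :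
    ∃ d ∈ ds, ∀ f ∈ d, holds M (interp M v) f := by
  rcases hC with ⟨φ, x, h, rfl⟩ | ⟨φ, x, h, rfl⟩ | ⟨φ, x, qs, h, rfl, -, rfl⟩ |
    ⟨φ, x, ps, qs, h, hφ, -, -, hps, rfl⟩ | ⟨φ, ψ, x, h, rfl⟩ | ⟨α, φ, x, y, h, -, rfl⟩ |
    ⟨α, φ, x, h, rfl⟩ | ⟨φ, x, hT, hF, rfl⟩ | ⟨α, x, y, hT, hF, rfl⟩ | ⟨α, x, y, h, rfl⟩ |
    ⟨α, x, y, h, rfl⟩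
  · exact ⟨_, List.mem_singleton_self _, by simpa [holds, KModel.sat] using hs _ h⟩
  · exact ⟨_, List.mem_singleton_self _, by simpa [holds, KModel.sat] using hs _ h⟩
  · obtain ⟨q, hq, hsat⟩ := KModel.exists_mem_disjuncts_sat (hs _ h)
    exact exists_holds_T_of_mem hq hsat
  · obtain ⟨q, hq, hsat⟩ := KModel.exists_mem_disjuncts_sat (hs _ h)
    rw [hφ, Multiset.mem_add] at hq
    rcases hq with hq | hq
    · obtain ⟨p, hp, rfl⟩ := Multiset.mem_map.1 hq
      exact (hsat (hs _ (hps p hp))).elim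
    · exact exists_holds_T_of_mem hq hsat
  · have := hs _ h
    exact ⟨_, List.mem_singleton_self _, by simp_all [holds, KModel.sat]⟩
  · by_cases hR : M.RT α (interp M v x) (interp M v y)
    · exact ⟨{TabFm.T φ y}, by simp, by simpa [holds] using hs _ h _ hR⟩
    · exact ⟨{TabFm.FR α x y}, by simp, by simpa [holds] using hR⟩
  · have hsk := interp_sk M v (by simpa [holds, KModel.sat] using hs _ h)
    exact ⟨_, List.mem_singleton_self _, by simpa [holds] using hsk⟩
  · exact (hs _ hF (hs _ hT)).elim
  · exact (hs _ hF (hs _ hT)).elim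
  · exact ⟨_, List.mem_singleton_self _, by simpa [holds, KModel.RT] using hs _ h⟩
  · exact ⟨_, List.mem_singleton_self _, by simpa [holds, KModel.RT] using hs _ h⟩

end Soundness

section Completeness

variable {m : ℕ} {S : Set (TabFm m)} {φ ψ : Fm m} {α : RTerm m} {x y : Label m}

theorem TKmNotHyp.negT (h : TabFm.T (.neg φ) x ∈ S) : TKmNotHyp m S [{TabFm.F φ x}] :=
  Or.inl ⟨φ, x, h, rfl⟩

theorem TKmNotHyp.negF (h : TabFm.F (.neg φ) x ∈ S) : TKmNotHyp m S [{TabFm.T φ x}] :=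
  Or.inr <| Or.inl ⟨φ, x, h, rfl⟩

theorem TKmNotHyp.split (h : TabFm.T (.or φ ψ) x ∈ S) :
    TKmNotHyp m S ((disjuncts (.or φ ψ)).toList.map fun q => {TabFm.T q x}) :=
  Or.inr <| Or.inr <| Or.inl ⟨_, x, _, h, rfl, two_le_card_disjuncts_or φ ψ, rfl⟩

theorem TKmNotHyp.orF (h : TabFm.F (.or φ ψ) x ∈ S) :
    TKmNotHyp m S [{TabFm.F φ x, TabFm.F ψ x}] :=
  Or.inr <| Or.inr <| Or.inr <| Or.inr <| Or.inl ⟨φ, ψ, x, h, rfl⟩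

theorem TKmNotHyp.box (h : TabFm.T (.box α φ) x ∈ S) (hy : y ∈ Lab S) :
    TKmNotHyp m S [{TabFm.FR α x y}, {TabFm.T φ y}] :=
  Or.inr <| Or.inr <| Or.inr <| Or.inr <| Or.inr <| Or.inl ⟨α, φ, x, y, h, hy, rfl⟩

theorem TKmNotHyp.dia (h : TabFm.F (.box α φ) x ∈ S) :
    TKmNotHyp m S [{TabFm.TR α x (.sk α φ x), TabFm.F φ (.sk α φ x)}] :=
  Or.inr <| Or.inr <| Or.inr <| Or.inr <| Or.inr <| Or.inr <| Or.inl ⟨α, φ, x, h, rfl⟩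

theorem TKmNotHyp.clash (hT : TabFm.T φ x ∈ S) (hF : TabFm.F φ x ∈ S) : TKmNotHyp m S [] :=
  Or.inr <| Or.inr <| Or.inr <| Or.inr <| Or.inr <| Or.inr <| Or.inr <| Or.inl ⟨φ, x, hT, hF, rfl⟩

theorem TKmNotHyp.clashR (hT : TabFm.TR α x y ∈ S) (hF : TabFm.FR α x y ∈ S) :
    TKmNotHyp m S [] :=
  Or.inr <| Or.inr <| Or.inr <| Or.inr <| Or.inr <| Or.inr <| Or.inr <| Or.inr <|
    Or.inl ⟨α, x, y, hT, hF, rfl⟩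

theorem TKmNotHyp.negRT (h : TabFm.TR (.neg α) x y ∈ S) : TKmNotHyp m S [{TabFm.FR α x y}] :=
  Or.inr <| Or.inr <| Or.inr <| Or.inr <| Or.inr <| Or.inr <| Or.inr <| Or.inr <| Or.inr <|
    Or.inl ⟨α, x, y, h, rfl⟩

theorem TKmNotHyp.negRF (h : TabFm.FR (.neg α) x y ∈ S) : TKmNotHyp m S [{TabFm.TR α x y}] :=
  Or.inr <| Or.inr <| Or.inr <| Or.inr <| Or.inr <| Or.inr <| Or.inr <| Or.inr <| Or.inr <|
    Or.inr ⟨α, x, y, h, rfl⟩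

def Saturated (C : Calc m) (S : Set (TabFm m)) : Prop :=
  ∀ ds, C S ds → ∃ d ∈ ds, d ⊆ S

theorem Saturated.subset_of_single {C : Calc m} {d : Set (TabFm m)} (hS : Saturated C S)
    (hC : C S [d]) : d ⊆ S := by
  obtain ⟨d', hd', hsub⟩ := hS _ hC
  rwa [List.mem_singleton.1 hd'] at hsub

def branchModel (S : Set (TabFm m)) : LModel m where
  R a t t' := TabFm.TR (.atom a) t t' ∈ S
  V p t := TabFm.T (.var p) t ∈ S

theorem branchModel_RT (hO : ¬ TKmNotHyp m S []) (hS : Saturated (TKmNotHyp m) S)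
    (α : RTerm m) (t t' : Label m) :
    (TabFm.TR α t t' ∈ S → (branchModel S).RT α t t') ∧
    (TabFm.FR α t t' ∈ S → ¬ (branchModel S).RT α t t') := by
  induction α generalizing t t' with
  | atom a => exact ⟨id, fun hF hT => hO (.clashR hT hF)⟩
  | neg α ih =>
    exact ⟨fun h => (ih t t').2 (hS.subset_of_single (.negRT h) rfl),
      fun h hn => hn ((ih t t').1 (hS.subset_of_single (.negRF h) rfl))⟩

/-- The third conjunct carries the induction through (split_k), whose conclusions are the
disjuncts of a formula rather than its immediate subformulas. -/
theorem branchModel_sat (hO : ¬ TKmNotHyp m S []) (hS : Saturated (TKmNotHyp m) S)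
    (φ : Fm m) (t : Label m) :
    (TabFm.T φ t ∈ S → (branchModel S).sat (Lab S) t φ) ∧
    (TabFm.F φ t ∈ S → ¬ (branchModel S).sat (Lab S) t φ) ∧
    (∀ q ∈ disjuncts φ, TabFm.T q t ∈ S → (branchModel S).sat (Lab S) t φ) := by
  induction φ generalizing t with
  | var p =>
    refine ⟨id, fun hF hT => hO (.clash hT hF), fun q hq hT => ?_⟩
    rwa [Multiset.mem_singleton.1 hq] at hT
  | neg φ ih =>
    have hT (h : TabFm.T (.neg φ) t ∈ S) : (branchModel S).sat (Lab S) t (.neg φ) :=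
      (ih t).2.1 (hS.subset_of_single (.negT h) rfl)
    refine ⟨hT, fun h hn => hn ((ih t).1 (hS.subset_of_single (.negF h) rfl)), fun q hq h => ?_⟩
    rw [Multiset.mem_singleton.1 hq] at h
    exact hT h
  | or φ ψ ih₁ ih₂ =>
    have hdisj : ∀ q ∈ disjuncts (.or φ ψ), TabFm.T q t ∈ S →
        (branchModel S).sat (Lab S) t (.or φ ψ) := by
      intro q hq h
      rcases Multiset.mem_add.1 hq with hq | hq
      exacts [Or.inl ((ih₁ t).2.2 q hq h), Or.inr ((ih₂ t).2.2 q hq h)]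
    refine ⟨fun h => ?_, fun h => ?_, hdisj⟩
    · obtain ⟨d, hd, hsub⟩ := hS _ (.split h)
      obtain ⟨q, hq, rfl⟩ := List.mem_map.1 hd
      exact hdisj q (Multiset.mem_toList.1 hq) (hsub rfl)
    · have hsub := hS.subset_of_single (.orF h)
      rintro (hφ | hψ)
      exacts [(ih₁ t).2.1 (hsub (Or.inl rfl)) hφ, (ih₂ t).2.1 (hsub (Or.inr rfl)) hψ]
  | box α φ ih =>
    have hT (h : TabFm.T (.box α φ) t ∈ S) : (branchModel S).sat (Lab S) t (.box α φ) := by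
      intro t' ht' hR
      obtain ⟨d, hd, hsub⟩ := hS _ (.box h ht')
      rcases List.mem_pair.1 hd with rfl | rfl
      exacts [((branchModel_RT hO hS α t t').2 (hsub rfl) hR).elim, (ih t').1 (hsub rfl)]
    refine ⟨hT, fun h hsat => ?_, fun q hq h => ?_⟩
    · have hsub := hS.subset_of_single (.dia h)
      have hTR : TabFm.TR α t (.sk α φ t) ∈ S := hsub (Or.inl rfl)
      exact (ih _).2.1 (hsub (Or.inr rfl))
        (hsat _ (Or.inr ⟨_, hTR, Or.inr rfl⟩) ((branchModel_RT hO hS α t _).1 hTR))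
    · rw [Multiset.mem_singleton.1 hq] at h
      exact hT h

theorem reflects_branchModel (hO : ¬ TKmNotHyp m S []) (hS : Saturated (TKmNotHyp m) S) :
    Reflects (branchModel S) S :=
  ⟨fun φ t => (branchModel_sat hO hS φ t).1, fun φ t => (branchModel_sat hO hS φ t).2.1,
    fun α t t' => (branchModel_RT hO hS α t t').1, fun α t t' => (branchModel_RT hO hS α t t').2⟩

end Completeness

/-- The hypertableau calculus `T_{K_m(¬)}^{hyp}` is sound and
constructively complete for the logic `K_m(¬)`. -/
theorem TKmNotHyp_sound_and_constructively_complete (m : ℕ) :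
    (∀ N : Set (Fm m), N.Finite → Satisfiable N →
      ∀ Tb : Tableau m (TKmNotHyp m) N, Tb.Expanded →
        ∃ Br : Branch Tb, Br.IsOpen) ∧
    (∀ (N : Set (Fm m)) (Tb : Tableau m (TKmNotHyp m) N), Tb.Expanded →
      ∀ Br : Branch Tb, Br.IsOpen → ∃ M : LModel m, Reflects M Br.fmls) := by
  refine ⟨fun N _ ⟨M, v, hv⟩ Tb _ => ?_,
    fun N Tb hTb Br hBr => ⟨branchModel Br.fmls, reflects_branchModel hBr (hTb Br hBr)⟩⟩
  refine Tb.exists_open_branch (holds M (interp M v)) ?_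
    (fun _ _ => TKmNotHyp.exists_holds_denominator M v)
  rintro _ ⟨φ, hφ, rfl⟩
  exact hv φ hφ

end KmNotTableau
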